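/- Let C ⊆ F_{q^m}^n be an F_{q^m}-linear q^r-cyclic code with minimal generator G(x) of C(x) and root space T = Z(G). Then: (1) a q^r-polynomial F(x) over F_{q^m} has class F ∈ C(x) if and only if F(β) = 0 for all β ∈ T; (2) if β_1, ..., β_{n−k} is a basis of T over F_{q^r}, then the (n−k) × n matrix M(β) whose i-th row is (β_i, β_i^{q^r}, β_i^{q^{2r}}, ..., β_i^{q^{(n−1)r}}) is a parity check matrix of C over F_{q^{rn}}, i.e., C = { c ∈ F_{q^m}^n : M(β) c^T = 0 }. -/

import Mathlib

/-- `P` is a `q^r`-linearized polynomial over `F`: every exponent appearing in its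
support is of the form `q ^ (r * j)`. -/
def IsLin (q r : ℕ) {F : Type*} [Field F] (P : Polynomial F) : Prop :=
  ∀ i ∈ P.support, ∃ j : ℕ, i = q ^ (r * j)

/-- The `q^r`-linearized polynomial `∑ v i * X ^ (q ^ (r * i))` associated to a vector
`v ∈ F^n`; this is the unique representative of degree `< q^(r*n)` of a class of the
quotient ring `L` of `q^r`-polynomials modulo `X^(q^(r*n)) - X`, i.e. the map `γ_r`. -/
noncomputable def vecPoly (q r n : ℕ) {F : Type*} [Field F] (v : Fin n → F) : Polynomial F :=
  ∑ i : Fin n, Polynomial.C (v i) * Polynomial.X ^ q ^ (r * (i : ℕ))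

/-- The classes of `P` and `Q` modulo `X^(q^(r*n)) - X` coincide (equality in `L`). -/
def ClassEq (q r n : ℕ) {F : Type*} [Field F] (P Q : Polynomial F) : Prop :=
  (Polynomial.X ^ q ^ (r * n) - Polynomial.X : Polynomial F) ∣ (P - Q)

/-- The class of `P` in `L` lies in `C(x) = γ_r(C)`. -/
def MemCx (q r n : ℕ) {F : Type*} [Field F] (C : Set (Fin n → F)) (P : Polynomial F) : Prop :=
  ∃ v ∈ C, ClassEq q r n P (vecPoly q r n v)

/-- `G` is the minimal generator of `C(x)`: the monic `q^r`-polynomial of minimal degree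
whose residue class modulo `X^(q^(r*n)) - X` lies in `C(x)`. -/
def IsMinGen (q r n : ℕ) {F : Type*} [Field F] (C : Set (Fin n → F)) (G : Polynomial F) : Prop :=
  IsLin q r G ∧ G.Monic ∧ MemCx q r n C G ∧
    ∀ P : Polynomial F, IsLin q r P → P.Monic → MemCx q r n C P → G.natDegree ≤ P.natDegree

/-- A code `C ⊆ F^n` is `q^r`-cyclic if it is stable under the `q^r`-shift
`(c₀, …, c_{n-1}) ↦ (c_{n-1}^{q^r}, c₀^{q^r}, …, c_{n-2}^{q^r})`. -/
def IsQrCyclic (q r n : ℕ) [NeZero n] {F : Type*} [Field F] (C : Set (Fin n → F)) : Prop :=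
  ∀ c ∈ C, (fun i : Fin n => c (i - 1) ^ q ^ r) ∈ C

/-- `D` divides `P` symbolically on the right: `P = Q ⊗ D = Q ∘ D` for some
`q^r`-polynomial `Q`. -/
def SymDvdR (q r : ℕ) {F : Type*} [Field F] (D P : Polynomial F) : Prop :=
  ∃ Q : Polynomial F, IsLin q r Q ∧ P = Q.comp D

/-- The set of roots of `P` in the extension field `K` (the root space `Z(P)`). -/
def ZSet {F : Type*} (K : Type*) [Field F] [Field K] [Algebra F K] (P : Polynomial F) :
    Set K :=
  {β : K | Polynomial.aeval β P = 0}

/-- `P` is the minimal `q^r`-polynomial of `β` over `F`: the monic `q^r`-polynomial over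
`F` of minimal degree vanishing at `β`. -/
def IsMinQPoly (q r : ℕ) {F : Type*} {K : Type*} [Field F] [Field K] [Algebra F K]
    (β : K) (P : Polynomial F) : Prop :=
  IsLin q r P ∧ P.Monic ∧ Polynomial.aeval β P = 0 ∧
    ∀ Q : Polynomial F, IsLin q r Q → Q.Monic → Polynomial.aeval β Q = 0 →
      P.natDegree ≤ Q.natDegree

open Polynomial

section BasicLin

variable {q r : ℕ} {F : Type*} [Field F]

lemma isLin_zero : IsLin q r (0 : F[X]) := by simp [IsLin]

lemma isLin_add {P Q : F[X]} (hP : IsLin q r P) (hQ : IsLin q r Q) : IsLin q r (P + Q) := by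
  intro i hi
  rcases Finset.mem_union.mp (Polynomial.support_add hi) with h | h
  exacts [hP i h, hQ i h]

lemma isLin_neg {P : F[X]} (hP : IsLin q r P) : IsLin q r (-P) := by
  intro i hi; exact hP i (by simpa using hi)

lemma isLin_C_mul {P : F[X]} (c : F) (hP : IsLin q r P) : IsLin q r (C c * P) := by
  intro i hi
  apply hP
  rw [mem_support_iff] at hi ⊢
  intro h; rw [coeff_C_mul, h, mul_zero] at hi
  exact hi rfl

lemma isLin_sub {P Q : F[X]} (hP : IsLin q r P) (hQ : IsLin q r Q) : IsLin q r (P - Q) := by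
  rw [sub_eq_add_neg]; exact isLin_add hP (isLin_neg hQ)

lemma isLin_X_pow (j : ℕ) : IsLin q r (X ^ q ^ (r * j) : F[X]) := by
  intro i hi
  rw [mem_support_iff, coeff_X_pow] at hi
  exact ⟨j, by by_contra h; rw [if_neg h] at hi; exact hi rfl⟩

lemma isLin_sum {ι : Type*} {s : Finset ι} {f : ι → F[X]} (h : ∀ i ∈ s, IsLin q r (f i)) :
    IsLin q r (∑ i ∈ s, f i) := by
  classical
  induction s using Finset.induction_on with
  | empty => simpa using isLin_zero
  | insert _ _ hx ih =>
    rw [Finset.sum_insert hx]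
    exact isLin_add (h _ (Finset.mem_insert_self _ _))
      (ih fun i hi => h i (Finset.mem_insert_of_mem hi))

lemma coeff_zero_of_isLin (hq2 : 2 ≤ q) {P : F[X]} (h : IsLin q r P) : P.coeff 0 = 0 := by
  by_contra h0
  obtain ⟨j, hj⟩ := h 0 (mem_support_iff.mpr h0)
  have : 0 < q ^ (r * j) := pow_pos (by omega) _
  omega

lemma natDegree_pow_exp_of_isLin {P : F[X]} (h : IsLin q r P) (hP : P ≠ 0) :
    ∃ e, P.natDegree = q ^ (r * e) :=
  h _ (natDegree_mem_support_of_nonzero hP)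

variable {p s : ℕ} [Fact p.Prime] [CharP F p] (hq : q = p ^ s)

include hq in
lemma isLin_pow_frob {P : F[X]} (hP : IsLin q r P) (j : ℕ) : IsLin q r (P ^ q ^ (r * j)) := by
  have hqp : q ^ (r * j) = p ^ (s * (r * j)) := by rw [hq, ← pow_mul]
  rw [hqp]
  intro i hi
  rw [← Polynomial.map_iterateFrobenius_expand p P (s * (r * j)), mem_support_iff, coeff_map,
    coeff_expand (pow_pos (Fact.out (p := p.Prime)).pos _)] at hi
  by_cases hd : p ^ (s * (r * j)) ∣ i
  · rw [if_pos hd] at hi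
    have h2 : P.coeff (i / p ^ (s * (r * j))) ≠ 0 := by
      intro h; rw [h, map_zero] at hi; exact hi rfl
    obtain ⟨j', hj'⟩ := hP _ (mem_support_iff.mpr h2)
    refine ⟨j' + j, ?_⟩
    have : i = i / p ^ (s * (r * j)) * p ^ (s * (r * j)) := (Nat.div_mul_cancel hd).symm
    rw [this, hj', ← hqp, ← pow_add, Nat.mul_add]
  · rw [if_neg hd, map_zero] at hi; exact absurd rfl hi

include hq in
lemma isLin_comp {P Q : F[X]} (hP : IsLin q r P) (hQ : IsLin q r Q) :
    IsLin q r (P.comp Q) := by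
  rw [Polynomial.comp_eq_sum_left, Polynomial.sum_def]
  refine isLin_sum fun i hi => ?_
  obtain ⟨j, hj⟩ := hP i hi
  rw [hj]
  exact isLin_C_mul _ (isLin_pow_frob hq hQ j)

end BasicLin
section ClassEqLemmas

variable {q r n : ℕ} {F : Type*} [Field F]

lemma classEq_refl (P : F[X]) : ClassEq q r n P P := by simp [ClassEq]

lemma classEq_symm {P Q : F[X]} (h : ClassEq q r n P Q) : ClassEq q r n Q P := by
  rw [ClassEq, show Q - P = -(P - Q) by ring]
  exact Dvd.dvd.neg_right h

lemma classEq_trans {P Q R : F[X]} (h1 : ClassEq q r n P Q) (h2 : ClassEq q r n Q R) :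
    ClassEq q r n P R := by
  have := dvd_add h1 h2
  rwa [sub_add_sub_cancel] at this

lemma classEq_add {P P' Q Q' : F[X]} (h1 : ClassEq q r n P P') (h2 : ClassEq q r n Q Q') :
    ClassEq q r n (P + Q) (P' + Q') := by
  have := dvd_add h1 h2
  rwa [show P - P' + (Q - Q') = P + Q - (P' + Q') by ring] at this

lemma classEq_C_mul {P P' : F[X]} (c : F) (h : ClassEq q r n P P') :
    ClassEq q r n (C c * P) (C c * P') := by
  rw [ClassEq, ← mul_sub]
  exact Dvd.dvd.mul_left h _

lemma classEq_sub {P P' Q Q' : F[X]} (h1 : ClassEq q r n P P') (h2 : ClassEq q r n Q Q') :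
    ClassEq q r n (P - Q) (P' - Q') := by
  have := dvd_sub h1 h2
  rwa [show P - P' - (Q - Q') = P - Q - (P' - Q') by ring] at this

variable {p s : ℕ} [Fact p.Prime] [CharP F p]

lemma classEq_pow_qr (hq : q = p ^ s) {P Q : F[X]} (h : ClassEq q r n P Q) :
    ClassEq q r n (P ^ q ^ r) (Q ^ q ^ r) := by
  have hqp : q ^ r = p ^ (s * r) := by rw [hq, ← pow_mul]
  rw [ClassEq, hqp, ← sub_pow_char_pow]
  exact dvd_pow h (pow_ne_zero _ (Fact.out (p := p.Prime)).ne_zero)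

lemma aeval_eq_of_classEq {K : Type*} [Field K] [Fintype K] [Algebra F K]
    (hK : Fintype.card K = q ^ (r * n)) {P Q : F[X]} (h : ClassEq q r n P Q) (β : K) :
    Polynomial.aeval β P = Polynomial.aeval β Q := by
  obtain ⟨H, hH⟩ := h
  have h0 : Polynomial.aeval β (P - Q) = 0 := by
    rw [hH, map_mul, map_sub, map_pow, Polynomial.aeval_X, ← hK, FiniteField.pow_card,
      sub_self, zero_mul]
  rw [map_sub, sub_eq_zero] at h0
  exact h0

end ClassEqLemmas

section VecPoly

variable {q r n : ℕ} {F : Type*} [Field F]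
open Polynomial

lemma vecPoly_zero : vecPoly q r n (0 : Fin n → F) = 0 := by simp [vecPoly]

lemma vecPoly_add (v w : Fin n → F) :
    vecPoly q r n (v + w) = vecPoly q r n v + vecPoly q r n w := by
  simp [vecPoly, ← Finset.sum_add_distrib, add_mul, C_add]

lemma vecPoly_sub (v w : Fin n → F) :
    vecPoly q r n (v - w) = vecPoly q r n v - vecPoly q r n w := by
  simp [vecPoly, ← Finset.sum_sub_distrib, sub_mul, C_sub]

lemma vecPoly_smul (c : F) (v : Fin n → F) :
    vecPoly q r n (c • v) = C c * vecPoly q r n v := by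
  simp [vecPoly, Finset.mul_sum, C_mul, mul_assoc]

lemma isLin_vecPoly (v : Fin n → F) : IsLin q r (vecPoly q r n v) :=
  isLin_sum fun i _ => isLin_C_mul _ (isLin_X_pow _)

lemma natDegree_vecPoly_lt (hq2 : 2 ≤ q) (hr : 0 < r) [NeZero n] (v : Fin n → F) :
    (vecPoly q r n v).natDegree < q ^ (r * n) := by
  have h1 : ∀ i : Fin n, (C (v i) * X ^ q ^ (r * (i : ℕ)) : F[X]).natDegree ≤ q ^ (r * (n - 1)) := by
    intro i
    refine (natDegree_C_mul_le _ _).trans ?_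
    simp only [natDegree_X_pow]
    exact Nat.pow_le_pow_right (by omega) (Nat.mul_le_mul_left r (by omega))
  refine lt_of_le_of_lt (Polynomial.natDegree_sum_le_of_forall_le _ _ fun i _ => h1 i) ?_
  have hn := Nat.pos_of_ne_zero (NeZero.ne n)
  exact Nat.pow_lt_pow_right (by omega) (mul_lt_mul_of_pos_left (by omega) hr)

lemma exp_inj (hq2 : 2 ≤ q) (hr : 0 < r) {i j : ℕ} (h : q ^ (r * i) = q ^ (r * j)) : i = j := by
  have := Nat.pow_right_injective hq2 h
  exact Nat.eq_of_mul_eq_mul_left hr this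

lemma vecPoly_coeff (hq2 : 2 ≤ q) (hr : 0 < r) (v : Fin n → F) (j : Fin n) :
    (vecPoly q r n v).coeff (q ^ (r * (j : ℕ))) = v j := by
  classical
  rw [vecPoly, finset_sum_coeff]
  rw [Finset.sum_eq_single j]
  · simp [coeff_C_mul, coeff_X_pow]
  · intro i _ hij
    rw [coeff_C_mul, coeff_X_pow, if_neg, mul_zero]
    intro h
    exact hij (Fin.ext (exp_inj hq2 hr (h.symm : q ^ (r * (i:ℕ)) = _)))
  · intro h; exact absurd (Finset.mem_univ j) h

lemma natDegree_Dpoly (hq2 : 2 ≤ q) (hr : 0 < r) [NeZero n] :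
    ((X : F[X]) ^ q ^ (r * n) - X).natDegree = q ^ (r * n) := by
  have hn := Nat.pos_of_ne_zero (NeZero.ne n)
  have h2 : 1 < q ^ (r * n) := Nat.one_lt_pow (by positivity) (by omega)
  have hlt : (X : F[X]).natDegree < ((X : F[X]) ^ q ^ (r * n)).natDegree := by
    rw [natDegree_X, natDegree_X_pow]; omega
  rw [natDegree_sub_eq_left_of_natDegree_lt hlt, natDegree_X_pow]

lemma classEq_vecPoly_inj (hq2 : 2 ≤ q) (hr : 0 < r) [NeZero n] {v w : Fin n → F}
    (h : ClassEq q r n (vecPoly q r n v) (vecPoly q r n w)) : v = w := by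
  rw [ClassEq, ← vecPoly_sub] at h
  have hz : vecPoly q r n (v - w) = 0 := by
    by_contra h0
    have := Polynomial.natDegree_le_of_dvd h h0
    rw [natDegree_Dpoly hq2 hr] at this
    exact absurd this (not_le.mpr (natDegree_vecPoly_lt hq2 hr _))
  funext j
  have h1 := vecPoly_coeff hq2 hr (v - w) j
  rw [hz, coeff_zero] at h1
  have h2 : v j - w j = 0 := by simpa using h1.symm
  exact sub_eq_zero.mp h2
end VecPoly
section Shift

open Polynomial

variable {q r n : ℕ} {F : Type*} [Field F] {p s : ℕ} [Fact p.Prime] [CharP F p]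

lemma vecPoly_pow_qr (hq : q = p ^ s) (v : Fin n → F) :
    (vecPoly q r n v) ^ q ^ r =
      ∑ i : Fin n, C (v i ^ q ^ r) * X ^ q ^ (r * ((i : ℕ) + 1)) := by
  have hqp : q ^ r = p ^ (s * r) := by rw [hq, ← pow_mul]
  rw [vecPoly, hqp, sum_pow_char_pow]
  refine Finset.sum_congr rfl fun i _ => ?_
  rw [mul_pow, ← C_pow, ← pow_mul, ← hqp, ← pow_add]
  congr 2

lemma classEq_shift (hq : q = p ^ s) [NeZero n] (v : Fin n → F) :
    ClassEq q r n ((vecPoly q r n v) ^ q ^ r)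
      (vecPoly q r n (fun i : Fin n => v (i - 1) ^ q ^ r)) := by
  classical
  obtain ⟨n', rfl⟩ : ∃ n', n = n' + 1 :=
    ⟨n - 1, by have := Nat.pos_of_ne_zero (NeZero.ne n); omega⟩
  rw [ClassEq, vecPoly_pow_qr hq, vecPoly]
  have hreindex : (∑ i : Fin (n' + 1), C (v i ^ q ^ r) * X ^ q ^ (r * ((i : ℕ) + 1)) : F[X]) =
      ∑ j : Fin (n' + 1), C (v (j - 1) ^ q ^ r) * X ^ q ^ (r * (((j - 1 : Fin (n' + 1)) : ℕ) + 1)) := by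
    have h := Equiv.sum_comp (Equiv.addRight (1 : Fin (n' + 1)))
      (fun j : Fin (n' + 1) => (C (v (j - 1) ^ q ^ r) * X ^ q ^ (r * (((j - 1 : Fin (n' + 1)) : ℕ) + 1)) : F[X]))
    rw [← h]
    refine Finset.sum_congr rfl fun i _ => ?_
    simp [Equiv.coe_addRight, add_sub_cancel_right]
  rw [hreindex, ← Finset.sum_sub_distrib]
  have hterm : ∀ j : Fin (n' + 1), j ≠ 0 →
      (C (v (j - 1) ^ q ^ r) * X ^ q ^ (r * (((j - 1 : Fin (n' + 1)) : ℕ) + 1))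
        - C (v (j - 1) ^ q ^ r) * X ^ q ^ (r * (j : ℕ)) : F[X]) = 0 := by
    intro j hj
    have hcoe : ((j - 1 : Fin (n' + 1)) : ℕ) + 1 = (j : ℕ) := by
      rw [Fin.coe_sub_one, if_neg hj]
      have : (j : ℕ) ≠ 0 := fun h => hj (Fin.ext h)
      omega
    rw [hcoe, sub_self]
  rw [Finset.sum_eq_single (0 : Fin (n' + 1)) (fun j _ hj => hterm j hj)
    (fun h => absurd (Finset.mem_univ _) h)]
  have hcoe0 : (((0 : Fin (n' + 1)) - 1 : Fin (n' + 1)) : ℕ) + 1 = n' + 1 := by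
    rw [Fin.coe_sub_one, if_pos rfl]
  rw [hcoe0]
  have hfinal : (C (v (0 - 1 : Fin (n' + 1)) ^ q ^ r) * X ^ q ^ (r * (n' + 1))
      - C (v (0 - 1 : Fin (n' + 1)) ^ q ^ r) * X ^ q ^ (r * ((0 : Fin (n' + 1)) : ℕ)) : F[X])
      = C (v (0 - 1 : Fin (n' + 1)) ^ q ^ r) * (X ^ q ^ (r * (n' + 1)) - X) := by
    rw [mul_sub]
    norm_num
  rw [hfinal]
  exact dvd_mul_left _ _

end Shift
section MemCxClosure

open Polynomial

variable {q r n : ℕ} {Fqm : Type*} [Field Fqm] {p s : ℕ} [Fact p.Prime] [CharP Fqm p]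
  [NeZero n] {C : Submodule Fqm (Fin n → Fqm)}

lemma memCx_zero : MemCx q r n (C : Set (Fin n → Fqm)) 0 :=
  ⟨0, C.zero_mem, by rw [vecPoly_zero]; exact classEq_refl 0⟩

lemma memCx_add {P P' : Fqm[X]} (h : MemCx q r n (C : Set (Fin n → Fqm)) P)
    (h' : MemCx q r n (C : Set (Fin n → Fqm)) P') :
    MemCx q r n (C : Set (Fin n → Fqm)) (P + P') := by
  obtain ⟨v, hv, hcv⟩ := h
  obtain ⟨w, hw, hcw⟩ := h'
  exact ⟨v + w, C.add_mem hv hw, by rw [vecPoly_add]; exact classEq_add hcv hcw⟩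

lemma memCx_C_mul {P : Fqm[X]} (c : Fqm) (h : MemCx q r n (C : Set (Fin n → Fqm)) P) :
    MemCx q r n (C : Set (Fin n → Fqm)) (Polynomial.C c * P) := by
  obtain ⟨v, hv, hcv⟩ := h
  exact ⟨c • v, C.smul_mem c hv, by rw [vecPoly_smul]; exact classEq_C_mul c hcv⟩

lemma memCx_sub {P P' : Fqm[X]} (h : MemCx q r n (C : Set (Fin n → Fqm)) P)
    (h' : MemCx q r n (C : Set (Fin n → Fqm)) P') :
    MemCx q r n (C : Set (Fin n → Fqm)) (P - P') := by
  have := memCx_add h (memCx_C_mul (-1) h')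
  simpa [sub_eq_add_neg, Polynomial.C_neg] using this

lemma memCx_pow_qr (hq : q = p ^ s) (hC : IsQrCyclic q r n (C : Set (Fin n → Fqm)))
    {P : Fqm[X]} (h : MemCx q r n (C : Set (Fin n → Fqm)) P) :
    MemCx q r n (C : Set (Fin n → Fqm)) (P ^ q ^ r) := by
  obtain ⟨v, hv, hcv⟩ := h
  refine ⟨fun i => v (i - 1) ^ q ^ r, hC v hv, ?_⟩
  have h1 : ClassEq q r n (P ^ q ^ r) ((vecPoly q r n v) ^ q ^ r) := classEq_pow_qr hq hcv
  exact classEq_trans h1 (classEq_shift hq v)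

lemma memCx_pow_qrj (hq : q = p ^ s) (hC : IsQrCyclic q r n (C : Set (Fin n → Fqm)))
    {P : Fqm[X]} (h : MemCx q r n (C : Set (Fin n → Fqm)) P) (j : ℕ) :
    MemCx q r n (C : Set (Fin n → Fqm)) (P ^ q ^ (r * j)) := by
  induction j with
  | zero => simpa using h
  | succ j ih =>
    have : q ^ (r * (j + 1)) = q ^ (r * j) * q ^ r := by rw [← pow_add, Nat.mul_add, Nat.mul_one]
    rw [this, pow_mul]
    exact memCx_pow_qr hq hC ih

lemma memCx_comp (hq : q = p ^ s) (hC : IsQrCyclic q r n (C : Set (Fin n → Fqm)))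
    {Q P : Fqm[X]} (hQ : IsLin q r Q) (h : MemCx q r n (C : Set (Fin n → Fqm)) P) :
    MemCx q r n (C : Set (Fin n → Fqm)) (Q.comp P) := by
  classical
  rw [Polynomial.comp_eq_sum_left, Polynomial.sum_def]
  have : ∀ t : Finset ℕ, (∀ i ∈ t, i ∈ Q.support) →
      MemCx q r n (C : Set (Fin n → Fqm)) (∑ i ∈ t, Polynomial.C (Q.coeff i) * P ^ i) := by
    intro t
    induction t using Finset.induction_on with
    | empty => intro _; simpa using (memCx_zero (C := C))
    | insert _ _ hx ih =>
      intro hsub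
      rw [Finset.sum_insert hx]
      refine memCx_add ?_ (ih fun i hi => hsub i (Finset.mem_insert_of_mem hi))
      obtain ⟨j, hj⟩ := hQ _ (hsub _ (Finset.mem_insert_self _ _))
      rw [hj]
      exact memCx_C_mul _ (memCx_pow_qrj hq hC h j)
  exact this Q.support fun i hi => hi

end MemCxClosure

section Division

open Polynomial

variable {q r : ℕ} {F : Type*} [Field F] {p s : ℕ} [Fact p.Prime] [CharP F p]

lemma natDegree_pos_of_monic_isLin (hq2 : 2 ≤ q) {G : F[X]} (hlin : IsLin q r G)
    (hm : G.Monic) : 0 < G.natDegree := by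
  rcases Nat.eq_zero_or_pos G.natDegree with h0 | h
  · exfalso
    have hne : G ≠ 0 := hm.ne_zero
    have : G.coeff 0 ≠ 0 := by
      intro h
      have := hm.leadingCoeff
      rw [Polynomial.leadingCoeff, h0, h] at this
      exact one_ne_zero this.symm
    exact this (coeff_zero_of_isLin hq2 hlin)
  · exact h

lemma sym_division (hq : q = p ^ s) (hq2 : 2 ≤ q) (hr : 0 < r) {G : F[X]}
    (hGlin : IsLin q r G) (hGm : G.Monic) (P : F[X]) (hP : IsLin q r P) :
    ∃ Q R : F[X], IsLin q r Q ∧ IsLin q r R ∧ P = Q.comp G + R ∧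
      R.natDegree < G.natDegree := by
  have hGd1 : 0 < G.natDegree := natDegree_pos_of_monic_isLin hq2 hGlin hGm
  have hGne : G ≠ 0 := hGm.ne_zero
  obtain ⟨d, hd⟩ := natDegree_pow_exp_of_isLin hGlin hGne
  have main : ∀ N (P : F[X]), P.natDegree ≤ N → IsLin q r P →
      ∃ Q R : F[X], IsLin q r Q ∧ IsLin q r R ∧ P = Q.comp G + R ∧
        R.natDegree < G.natDegree := by
    intro N
    induction N using Nat.strong_induction_on with
    | _ N ih =>
      intro P hdeg hPlin
      by_cases hlt : P.natDegree < G.natDegree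
      · exact ⟨0, P, isLin_zero, hPlin, by simp, hlt⟩
      push_neg at hlt
      have hPne : P ≠ 0 := by
        rintro rfl
        rw [natDegree_zero] at hlt
        omega
      obtain ⟨e, he⟩ := natDegree_pow_exp_of_isLin hPlin hPne
      have hde : d ≤ e := by
        have : q ^ (r * d) ≤ q ^ (r * e) := by rw [← hd, ← he]; exact hlt
        have := (Nat.pow_le_pow_iff_right (by omega : 1 < q)).mp this
        exact Nat.le_of_mul_le_mul_left this hr
      set M : F[X] := Polynomial.C P.leadingCoeff * G ^ q ^ (r * (e - d)) with hM
      have hGpowdeg : (G ^ q ^ (r * (e - d))).natDegree = q ^ (r * e) := by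
        rw [natDegree_pow, hd, ← pow_add]
        congr 1
        have : r * (e - d) + r * d = r * e := by
          rw [← Nat.mul_add]
          congr 1
          omega
        exact this
      have hMne : M ≠ 0 := by
        apply mul_ne_zero
        · exact Polynomial.C_ne_zero.mpr (leadingCoeff_ne_zero.mpr hPne)
        · exact pow_ne_zero _ hGne
      have hMdeg : M.natDegree = P.natDegree := by
        rw [hM, Polynomial.natDegree_C_mul (leadingCoeff_ne_zero.mpr hPne), hGpowdeg, he]
      have hMlc : M.leadingCoeff = P.leadingCoeff := by
        rw [hM, leadingCoeff_mul, leadingCoeff_pow, hGm.leadingCoeff, one_pow, mul_one,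
          leadingCoeff_C]
      have hsub : (P - M).degree < P.degree := by
        refine degree_sub_lt ?_ hPne hMlc.symm
        rw [degree_eq_natDegree hPne, degree_eq_natDegree hMne, hMdeg]
      have hlt2 : (P - M).natDegree < N := by
        rcases eq_or_ne (P - M) 0 with h0 | h0
        · rw [h0, natDegree_zero]; omega
        · have := Polynomial.natDegree_lt_natDegree h0 hsub
          omega
      have hPMlin : IsLin q r (P - M) :=
        isLin_sub hPlin (isLin_C_mul _ (isLin_pow_frob hq hGlin _))
      obtain ⟨Q, R, hQ, hR, heq, hRd⟩ := ih _ hlt2 (P - M) le_rfl hPMlin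
      refine ⟨Q + Polynomial.C P.leadingCoeff * X ^ q ^ (r * (e - d)), R,
        isLin_add hQ (isLin_C_mul _ (isLin_X_pow _)), hR, ?_, hRd⟩
      rw [add_comp, mul_comp, C_comp, X_pow_comp]
      calc P = (Q.comp G + R) + M := by rw [← heq]; ring
      _ = Q.comp G + Polynomial.C P.leadingCoeff * G ^ q ^ (r * (e - d)) + R := by
            rw [hM]; ring
  exact main P.natDegree P le_rfl hP
end Division
section Aeval

open Polynomial

variable {q r : ℕ} {F K : Type*} [Field F] [Field K] [Algebra F K]
  {p s : ℕ} [Fact p.Prime] [CharP K p]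

lemma aeval_eq_support_sum (P : F[X]) (β : K) :
    aeval β P = ∑ i ∈ P.support, algebraMap F K (P.coeff i) * β ^ i := by
  rw [aeval_def, eval₂_eq_sum, Polynomial.sum_def]

lemma aeval_isLin_add (hq : q = p ^ s) {P : F[X]} (hP : IsLin q r P) (β γ : K) :
    aeval (β + γ) P = aeval β P + aeval γ P := by
  rw [aeval_eq_support_sum, aeval_eq_support_sum, aeval_eq_support_sum,
    ← Finset.sum_add_distrib]
  refine Finset.sum_congr rfl fun i hi => ?_
  obtain ⟨j, hj⟩ := hP i hi
  have hij : i = p ^ (s * (r * j)) := by rw [hj, hq, ← pow_mul]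
  rw [hij, add_pow_char_pow, mul_add]

lemma aeval_isLin_smul (hq : q = p ^ s) {Fqr : Type*} [Field Fqr] [Fintype Fqr]
    [Algebra Fqr K] (hcardr : Fintype.card Fqr = q ^ r)
    {P : F[X]} (hP : IsLin q r P) (lam : Fqr) (β : K) :
    aeval (algebraMap Fqr K lam * β) P = algebraMap Fqr K lam * aeval β P := by
  rw [aeval_eq_support_sum, aeval_eq_support_sum, Finset.mul_sum]
  refine Finset.sum_congr rfl fun i hi => ?_
  obtain ⟨j, hj⟩ := hP i hi
  have hlam : (algebraMap Fqr K lam) ^ i = algebraMap Fqr K lam := by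
    rw [← map_pow]
    congr 1
    rw [hj, pow_mul, ← hcardr]
    exact FiniteField.pow_card_pow j lam
  rw [mul_pow, hlam]
  ring

/-- The `Fqr`-linear evaluation map attached to a linearized polynomial. -/
noncomputable def linEval (hq : q = p ^ s) {Fqr : Type*} [Field Fqr] [Fintype Fqr]
    [Algebra Fqr K] (hcardr : Fintype.card Fqr = q ^ r)
    {P : F[X]} (hP : IsLin q r P) : K →ₗ[Fqr] K where
  toFun := fun β => aeval β P
  map_add' := aeval_isLin_add hq hP
  map_smul' := by
    intro lam β
    simp only [RingHom.id_apply, Algebra.smul_def]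
    exact aeval_isLin_smul hq hcardr hP lam β

lemma card_ZSet_le {P : F[X]} (hP : P ≠ 0) [Fintype K] :
    Nat.card (ZSet K P) ≤ P.natDegree := by
  classical
  have hmapne : P.map (algebraMap F K) ≠ 0 :=
    (Polynomial.map_ne_zero_iff (algebraMap F K).injective).mpr hP
  have hsub : ZSet K P ⊆ ((P.map (algebraMap F K)).roots.toFinset : Set K) := by
    intro β hβ
    simp only [Finset.coe_sort_coe, Multiset.mem_toFinset, Finset.mem_coe]
    rw [Polynomial.mem_roots hmapne, Polynomial.IsRoot, Polynomial.eval_map, ← aeval_def]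
    exact hβ
  calc Nat.card (ZSet K P) = (ZSet K P).ncard := Nat.card_coe_set_eq _
  _ ≤ ((P.map (algebraMap F K)).roots.toFinset : Set K).ncard :=
      Set.ncard_le_ncard hsub (Set.toFinite _)
  _ = (P.map (algebraMap F K)).roots.toFinset.card := Set.ncard_coe_finset _
  _ ≤ Multiset.card (P.map (algebraMap F K)).roots := Multiset.toFinset_card_le _
  _ ≤ (P.map (algebraMap F K)).natDegree := Polynomial.card_roots' _
  _ = P.natDegree := Polynomial.natDegree_map_eq_of_injective (algebraMap F K).injective _

end Aeval
section Structure

open Polynomial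

variable {q r n : ℕ} {Fqm : Type*} [Field Fqm] {p s : ℕ} [Fact p.Prime] [CharP Fqm p]
  [NeZero n] {C : Submodule Fqm (Fin n → Fqm)} {G : Fqm[X]}

lemma exists_comp_of_memCx (hq : q = p ^ s) (hq2 : 2 ≤ q) (hr : 0 < r)
    (hC : IsQrCyclic q r n (C : Set (Fin n → Fqm)))
    (hG : IsMinGen q r n (C : Set (Fin n → Fqm)) G)
    {P : Fqm[X]} (hPlin : IsLin q r P) (hPmem : MemCx q r n (C : Set (Fin n → Fqm)) P) :
    ∃ Q : Fqm[X], IsLin q r Q ∧ P = Q.comp G := by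
  obtain ⟨hGlin, hGm, hGmem, hGmin⟩ := hG
  obtain ⟨Q, R, hQ, hR, heq, hRd⟩ := sym_division hq hq2 hr hGlin hGm P hPlin
  have hRmem : MemCx q r n (C : Set (Fin n → Fqm)) R := by
    have h1 := memCx_comp hq hC hQ hGmem
    have h2 : R = P - Q.comp G := by rw [heq]; ring
    rw [h2]; exact memCx_sub hPmem h1
  rcases eq_or_ne R 0 with rfl | hR0
  · exact ⟨Q, hQ, by rw [heq, add_zero]⟩
  · exfalso
    have hlc : R.leadingCoeff ≠ 0 := leadingCoeff_ne_zero.mpr hR0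
    have hR'm : (Polynomial.C R.leadingCoeff⁻¹ * R).Monic := by
      rw [mul_comm]; exact monic_mul_leadingCoeff_inv hR0
    have hR'lin : IsLin q r (Polynomial.C R.leadingCoeff⁻¹ * R) := isLin_C_mul _ hR
    have hR'mem := memCx_C_mul (C := C) R.leadingCoeff⁻¹ hRmem
    have hR'd : (Polynomial.C R.leadingCoeff⁻¹ * R).natDegree = R.natDegree :=
      Polynomial.natDegree_C_mul (inv_ne_zero hlc)
    have := hGmin _ hR'lin hR'm hR'mem
    omega

end Structure

section Vanish

open Polynomial

lemma aeval_comp_eq_zero {q r : ℕ} {F K : Type*} [Field F] [Field K] [Algebra F K]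
    (hq2 : 2 ≤ q) {Q G : F[X]} (hQ : IsLin q r Q) {β : K} (hβ : aeval β G = 0) :
    aeval β (Q.comp G) = 0 := by
  rw [aeval_comp, hβ, aeval_def, eval₂_at_zero, coeff_zero_of_isLin hq2 hQ, map_zero]

end Vanish

section Counting

open Polynomial

lemma card_ZSet_G (q r n p s : ℕ) [Fact p.Prime] (hq : q = p ^ s) (hq2 : 2 ≤ q)
    (hr : 0 < r) [NeZero n]
    {Fqm K : Type*} [Field Fqm] [Field K] [Fintype K] [Algebra Fqm K] [CharP K p]
    (hcardK : Fintype.card K = q ^ (r * n))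
    {G Q : Fqm[X]} (hGlin : IsLin q r G) (hGne : G ≠ 0) {d : ℕ}
    (hd : G.natDegree = q ^ (r * d))
    (hcomp : ((X : Fqm[X]) ^ q ^ (r * n) - X) = Q.comp G) :
    Nat.card (ZSet K G) = q ^ (r * d) := by
  classical
  have hn := Nat.pos_of_ne_zero (NeZero.ne n)
  -- the additive evaluation map
  let φ : K →+ K := AddMonoidHom.mk' (fun β => aeval β G) (aeval_isLin_add hq hGlin)
  have hker : ZSet K G = (φ.ker : Set K) := by
    ext β
    simp [ZSet, φ, AddMonoidHom.mem_ker]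
  -- degree bookkeeping
  have hDdeg : ((X : Fqm[X]) ^ q ^ (r * n) - X).natDegree = q ^ (r * n) :=
    natDegree_Dpoly hq2 hr
  have hQG : Q.natDegree * q ^ (r * d) = q ^ (r * n) := by
    rw [← hd, ← natDegree_comp, ← hcomp, hDdeg]
  have hQne : Q ≠ 0 := by
    rintro rfl
    rw [zero_comp] at hcomp
    rw [hcomp, natDegree_zero] at hDdeg
    have : 0 < q ^ (r * n) := pow_pos (by omega) _
    omega
  have hapos : 0 < Q.natDegree := by
    rcases Nat.eq_zero_or_pos Q.natDegree with h0 | h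
    · rw [h0, zero_mul] at hQG
      have : 0 < q ^ (r * n) := pow_pos (by omega) _
      omega
    · exact h
  -- counting
  have hcard1 : Nat.card K = Nat.card (K ⧸ φ.ker) * Nat.card φ.ker :=
    AddSubgroup.card_eq_card_quotient_mul_card_addSubgroup φ.ker
  have hcard2 : Nat.card (K ⧸ φ.ker) = Nat.card φ.range :=
    Nat.card_congr (QuotientAddGroup.quotientKerEquivRange φ).toEquiv
  have hkerle : Nat.card φ.ker ≤ q ^ (r * d) := by
    rw [← hd]
    have : Nat.card φ.ker = Nat.card (ZSet K G) := by rw [hker]; rfl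
    rw [this]
    exact card_ZSet_le hGne
  have hrangele : Nat.card φ.range ≤ Q.natDegree := by
    have hsub : (φ.range : Set K) ⊆ ZSet K Q := by
      rintro y ⟨β, rfl⟩
      show aeval (aeval β G) Q = 0
      rw [← aeval_comp, ← hcomp, map_sub, map_pow, aeval_X, ← hcardK,
        FiniteField.pow_card, sub_self]
    calc Nat.card φ.range = ((φ.range : Set K)).ncard := Nat.card_coe_set_eq _
    _ ≤ (ZSet K Q).ncard := Set.ncard_le_ncard hsub (Set.toFinite _)
    _ = Nat.card (ZSet K Q) := (Nat.card_coe_set_eq _).symm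
    _ ≤ Q.natDegree := card_ZSet_le hQne
  have hcardKnat : Nat.card K = q ^ (r * n) := by rw [Nat.card_eq_fintype_card, hcardK]
  have hprod : Nat.card φ.range * Nat.card φ.ker = Q.natDegree * q ^ (r * d) := by
    rw [← hcard2, ← hcard1, hcardKnat, hQG]
  have hgoal : Nat.card φ.ker = q ^ (r * d) := by
    refine Nat.le_antisymm hkerle ?_
    have h1 : Q.natDegree * q ^ (r * d) ≤ Q.natDegree * Nat.card φ.ker := by
      calc Q.natDegree * q ^ (r * d) = Nat.card φ.range * Nat.card φ.ker := hprod.symm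
      _ ≤ Q.natDegree * Nat.card φ.ker := Nat.mul_le_mul_right _ hrangele
    exact Nat.le_of_mul_le_mul_left h1 hapos
  rw [hker]
  exact hgoal

end Counting
section AevalVec

open Polynomial

lemma aeval_vecPoly {q r n : ℕ} {F K : Type*} [Field F] [Field K] [Algebra F K]
    (v : Fin n → F) (β : K) :
    aeval β (vecPoly q r n v) =
      ∑ i : Fin n, algebraMap F K (v i) * β ^ q ^ (r * (i : ℕ)) := by
  rw [vecPoly, map_sum]
  refine Finset.sum_congr rfl fun i _ => ?_
  rw [map_mul, aeval_C, map_pow, aeval_X]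

end AevalVec

open Polynomial

/-- For an `F_{q^m}`-linear `q^r`-cyclic code `C` with minimal generator
`G` and root space `T = Z(G)`: (1) a `q^r`-polynomial `F` has class in `C(x)` iff it
vanishes on all of `T`; (2) if `β_1, …, β_{n-k}` is a basis of `T` over `F_{q^r}`, the
matrix with rows `(β_i, β_i^{q^r}, …, β_i^{q^{(n-1)r}})` is a parity check matrix of `C`
over `F_{q^{rn}}`. -/
theorem statement1
    (q m n r : ℕ) (hq : IsPrimePow q) (hm : 0 < m) (hr : 0 < r) [NeZero n]
    (hmn : m ∣ r * n)
    (Fqm Fqr K : Type*) [Field Fqm] [Fintype Fqm] [Field Fqr] [Fintype Fqr]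
    [Field K] [Fintype K] [Algebra Fqm K] [Algebra Fqr K]
    (hcardm : Fintype.card Fqm = q ^ m) (hcardr : Fintype.card Fqr = q ^ r)
    (hcardK : Fintype.card K = q ^ (r * n))
    (C : Submodule Fqm (Fin n → Fqm))
    (hC : IsQrCyclic q r n (C : Set (Fin n → Fqm)))
    (G : Polynomial Fqm) (hG : IsMinGen q r n (C : Set (Fin n → Fqm)) G)
    (T : Set K) (hT : T = ZSet K G)
    (k : ℕ) (hk : k = Module.finrank Fqm ↥C)
    (b : Fin (n - k) → K) (hb : LinearIndependent Fqr b)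
    (hbT : Submodule.span Fqr (Set.range b) = Submodule.span Fqr T)
    (hbmem : ∀ i, b i ∈ T) :
    (∀ P : Polynomial Fqm, IsLin q r P →
        (MemCx q r n (C : Set (Fin n → Fqm)) P ↔ ∀ β ∈ T, Polynomial.aeval β P = 0)) ∧
      (C : Set (Fin n → Fqm)) =
        {c : Fin n → Fqm | ∀ i : Fin (n - k),
          ∑ j : Fin n, algebraMap Fqm K (c j) * b i ^ q ^ (r * (j : ℕ)) = 0} := by

  classical
  have hq2 : 2 ≤ q := hq.two_le
  -- characteristic bookkeeping
  obtain ⟨l, sl, hlprime, hsl, hlq⟩ := hq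
  have hlnat : l.Prime := Nat.prime_iff.mpr hlprime
  set p := ringChar Fqm with hpdef
  haveI hchar : CharP Fqm p := ringChar.charP Fqm
  obtain ⟨a, hpp, hcard⟩ := FiniteField.card Fqm p
  haveI : Fact p.Prime := ⟨hpp⟩
  have hpl : p = l := by
    have h1 : p ^ (a : ℕ) = l ^ (sl * m) := by
      rw [← hcard, hcardm, ← hlq, ← pow_mul]
    have h2 : p ∣ l ^ (sl * m) := by
      rw [← h1]
      exact dvd_pow_self p (by exact_mod_cast a.pos.ne')
    have h3 : p ∣ l := hpp.dvd_of_dvd_pow h2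
    exact (Nat.prime_dvd_prime_iff_eq hpp hlnat).mp h3
  have hq' : q = p ^ sl := by rw [hpl, hlq]
  haveI hcharK : CharP K p := charP_of_injective_algebraMap (algebraMap Fqm K).injective p
  -- the minimal generator
  have hGlin := hG.1
  have hGm := hG.2.1
  have hGmem := hG.2.2.1
  have hGne : G ≠ 0 := hGm.ne_zero
  obtain ⟨d, hd⟩ := natDegree_pow_exp_of_isLin hGlin hGne
  -- X^(q^(rn)) - X is in C(x) and hence a symbolic multiple of G
  have hDlin : IsLin q r ((X : Fqm[X]) ^ q ^ (r * n) - X) := by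
    intro i hi
    rw [mem_support_iff, coeff_sub, coeff_X_pow, coeff_X] at hi
    by_cases h1 : i = q ^ (r * n)
    · exact ⟨n, h1⟩
    by_cases h2 : (1 : ℕ) = i
    · exact ⟨0, by rw [← h2, Nat.mul_zero, pow_zero]⟩
    exfalso
    rw [if_neg h1, if_neg h2] at hi
    simp at hi
  have hDmem : MemCx q r n (C : Set (Fin n → Fqm)) ((X : Fqm[X]) ^ q ^ (r * n) - X) := by
    refine ⟨0, C.zero_mem, ?_⟩
    rw [ClassEq, vecPoly_zero, sub_zero]
  obtain ⟨Qd, hQdlin, hQdcomp⟩ := exists_comp_of_memCx hq' hq2 hr hC hG hDlin hDmem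
  -- cardinality of the root space
  have hcardT : Nat.card T = q ^ (r * d) := by
    rw [hT]
    exact card_ZSet_G q r n p sl hq' hq2 hr hcardK hGlin hGne hd hQdcomp
  -- Part 1
  have part1 : ∀ P : Polynomial Fqm, IsLin q r P →
      (MemCx q r n (C : Set (Fin n → Fqm)) P ↔ ∀ β ∈ T, Polynomial.aeval β P = 0) := by
    intro P hPlin
    constructor
    · intro hPmem β hβ
      obtain ⟨QP, hQPlin, hQPcomp⟩ := exists_comp_of_memCx hq' hq2 hr hC hG hPlin hPmem
      rw [hQPcomp]
      have hβ0 : aeval β G = 0 := by rw [hT] at hβ; exact hβ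
      exact aeval_comp_eq_zero hq2 hQPlin hβ0
    · intro hvan
      obtain ⟨QP, R, hQP, hR, heq, hRd⟩ := sym_division hq' hq2 hr hGlin hGm P hPlin
      have hRvan : ∀ β ∈ T, aeval β R = 0 := by
        intro β hβ
        have h1 := hvan β hβ
        have h2 : aeval β (QP.comp G) = 0 :=
          aeval_comp_eq_zero hq2 hQP (by rw [hT] at hβ; exact hβ)
        have h3 : aeval β P = aeval β (QP.comp G) + aeval β R := by rw [heq, map_add]
        rw [h1, h2] at h3
        simpa using h3.symm
      rcases eq_or_ne R 0 with rfl | hR0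
      · rw [heq, add_zero]
        exact memCx_comp hq' hC hQP hGmem
      · exfalso
        have hTsub : T ⊆ ZSet K R := fun β hβ => hRvan β hβ
        have h1 : Nat.card T ≤ Nat.card (ZSet K R) := by
          rw [Nat.card_coe_set_eq, Nat.card_coe_set_eq]
          exact Set.ncard_le_ncard hTsub (Set.toFinite _)
        have h2 := card_ZSet_le (K := K) hR0
        rw [hcardT] at h1
        rw [hd] at hRd
        omega
  refine ⟨part1, ?_⟩
  -- Part 2
  ext c
  simp only [Set.mem_setOf_eq]
  constructor
  · intro hc i
    have hmem : MemCx q r n (C : Set (Fin n → Fqm)) (vecPoly q r n c) :=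
      ⟨c, hc, classEq_refl _⟩
    have hres := (part1 _ (isLin_vecPoly c)).mp hmem (b i) (hbmem i)
    rw [aeval_vecPoly] at hres
    exact hres
  · intro hEq
    have hPlin := isLin_vecPoly (q := q) (r := r) c
    set φ : K →ₗ[Fqr] K := linEval hq' hcardr hPlin with hφ
    have hbker : ∀ i, b i ∈ LinearMap.ker φ := by
      intro i
      rw [LinearMap.mem_ker]
      show aeval (b i) (vecPoly q r n c) = 0
      rw [aeval_vecPoly]
      exact hEq i
    have hspan : Submodule.span Fqr T ≤ LinearMap.ker φ := by
      rw [← hbT, Submodule.span_le]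
      rintro x ⟨i, rfl⟩
      exact hbker i
    have hvan : ∀ β ∈ T, aeval β (vecPoly q r n c) = 0 := by
      intro β hβ
      have hm := hspan (Submodule.subset_span hβ)
      rw [LinearMap.mem_ker] at hm
      exact hm
    obtain ⟨v, hv, hcv⟩ := (part1 _ hPlin).mpr hvan
    have hcveq : c = v := classEq_vecPoly_inj hq2 hr hcv
    rw [hcveq]
    exact hv
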